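/- arXiv:2307.09798 — 2 statements merged into one kernel-verified Lean document; each statement's English description precedes it below -/
import Mathlib

section
/- Let ξ have the Max-U-Exp(a, λ) distribution, let η be Exponential(1) independent of ξ, and let τ = η/ξ. Then τ has the Exp-Max-U-Exp(a, λ) distribution, i.e., P(τ ≤ t) = 1 - (1 - e^{-at})/(at) + (t/(a(λ+t)²))(1 - e^{-a(λ+t)}) for t > 0. -/
/-!
Because `ξ > 0` almost surely, conditioning on `ξ` gives
`P(η / ξ ≤ t) = E[1 - e^{-tξ}]`, and the layer-cake formula rewrites this as
`∫₀^∞ t e^{-ts} P(ξ > s) ds`. The survival function of Max-U-Exp is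
`1 - (s/a)(1 - e^{-λs})` on `[0, a]` and `e^{-λs}` beyond `a`, so the integral is elementary.
-/

open MeasureTheory Set

/-- The Max-U-Exp(a, λ) cumulative distribution function. -/
noncomputable def maxUExpCDF (a lam x : ℝ) : ℝ :=
  if x ≤ 0 then 0
  else if x ≤ a then (x / a) * (1 - Real.exp (-lam * x))
  else 1 - Real.exp (-lam * x)

open Real

lemma measure_map_Iic {Ω : Type*} [MeasurableSpace Ω] {P : Measure Ω} [IsFiniteMeasure P]
    {X : Ω → ℝ} (hX : Measurable X) (x : ℝ) :
    P.map X (Iic x) = ENNReal.ofReal (P {ω | X ω ≤ x}).toReal := by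
  rw [Measure.map_apply hX measurableSet_Iic, ENNReal.ofReal_toReal (measure_ne_top _ _)]
  rfl

lemma ProbabilityTheory.IndepFun.measure_div_le_eq_lintegral {Ω : Type*} [MeasurableSpace Ω]
    {P : Measure Ω} [IsFiniteMeasure P] {ξ η : Ω → ℝ} (hind : IndepFun ξ η P)
    (hξ : Measurable ξ) (hη : Measurable η) (hpos : ∀ᵐ x ∂P.map ξ, 0 < x) (t : ℝ) :
    P {ω | η ω / ξ ω ≤ t} = ∫⁻ x, P.map η (Iic (t * x)) ∂P.map ξ := by
  have hS : MeasurableSet {p : ℝ × ℝ | p.2 / p.1 ≤ t} :=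
    measurableSet_le (measurable_snd.div measurable_fst) measurable_const
  change P ((fun ω => (ξ ω, η ω)) ⁻¹' {p : ℝ × ℝ | p.2 / p.1 ≤ t}) = _
  rw [← Measure.map_apply_of_aemeasurable (hξ.prodMk hη).aemeasurable hS,
    hind.map_prod_eq_prod_map_map hξ.aemeasurable hη.aemeasurable, Measure.prod_apply hS]
  refine lintegral_congr_ae (hpos.mono fun x hx => congrArg _ ?_)
  ext y
  simp [div_le_iff₀ hx]

lemma hasDerivAt_exp_neg_mul (k s : ℝ) :
    HasDerivAt (fun s => exp (-k * s)) (-k * exp (-k * s)) s := by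
  simpa [mul_comm] using ((hasDerivAt_id' s).const_mul (-k)).exp

lemma hasDerivAt_antideriv_mul_exp_neg_mul {k : ℝ} (hk : k ≠ 0) (s : ℝ) :
    HasDerivAt (fun s => -(s / k + 1 / k ^ 2) * exp (-k * s)) (s * exp (-k * s)) s := by
  have hlin : HasDerivAt (fun s => -(s / k + 1 / k ^ 2)) (-(1 / k)) s :=
    (((hasDerivAt_id' s).div_const k).add_const _).neg
  refine (hlin.mul (hasDerivAt_exp_neg_mul k s)).congr_deriv ?_
  field_simp
  ring

lemma integral_mul_exp_neg_mul (k a : ℝ) :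
    ∫ s in 0..a, k * exp (-k * s) = 1 - exp (-k * a) := by
  rw [intervalIntegral.integral_eq_sub_of_hasDerivAt (f := fun s => -exp (-k * s))
    (fun s _ => (hasDerivAt_exp_neg_mul k s).neg.congr_deriv (by ring))
    ((by fun_prop : Continuous fun s => k * exp (-k * s)).intervalIntegrable _ _)]
  simp only [mul_zero, exp_zero]
  ring

lemma integral_id_mul_exp_neg_mul {k : ℝ} (hk : k ≠ 0) (a : ℝ) :
    ∫ s in 0..a, s * exp (-k * s) = (1 - (1 + k * a) * exp (-k * a)) / k ^ 2 := by
  rw [intervalIntegral.integral_eq_sub_of_hasDerivAt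
    (fun s _ => hasDerivAt_antideriv_mul_exp_neg_mul hk s)
    ((by fun_prop : Continuous fun s => s * exp (-k * s)).intervalIntegrable _ _)]
  simp only [mul_zero, exp_zero]
  field_simp
  ring

lemma lintegral_one_sub_exp_neg_mul {μ : Measure ℝ} (hμ : ∀ᵐ x ∂μ, 0 ≤ x) {t : ℝ}
    (ht : 0 ≤ t) :
    ∫⁻ x, ENNReal.ofReal (1 - exp (-t * x)) ∂μ =
      ∫⁻ s in Ioi 0, μ (Ioi s) * ENNReal.ofReal (t * exp (-t * s)) := by
  have := lintegral_comp_eq_lintegral_meas_lt_mul μ (f := id) hμ aemeasurable_id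
    (fun _ _ => (by fun_prop : Continuous fun s => t * exp (-t * s)).intervalIntegrable _ _)
    (ae_of_all _ fun s => by positivity)
  simp only [id, integral_mul_exp_neg_mul] at this
  exact this

section MaxUExp

variable {a lam t x : ℝ}

lemma maxUExpCDF_of_nonpos (hx : x ≤ 0) : maxUExpCDF a lam x = 0 := if_pos hx

lemma maxUExpCDF_of_nonneg_of_le (h0 : 0 ≤ x) (hx : x ≤ a) :
    maxUExpCDF a lam x = x / a * (1 - exp (-lam * x)) := by
  rcases h0.eq_or_lt with rfl | hpos
  · simp [maxUExpCDF]
  · rw [maxUExpCDF, if_neg hpos.not_ge, if_pos hx]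

lemma maxUExpCDF_of_lt (ha : 0 < a) (hx : a < x) : maxUExpCDF a lam x = 1 - exp (-lam * x) := by
  rw [maxUExpCDF, if_neg (by linarith), if_neg hx.not_ge]

lemma maxUExp_survival_eqOn_Icc :
    EqOn (fun s => (1 - maxUExpCDF a lam s) * (t * exp (-t * s)))
      (fun s => t * exp (-t * s) - t / a * (s * exp (-t * s))
        + t / a * (s * exp (-(lam + t) * s))) (Icc 0 a) := by
  intro s hs
  simp only
  rw [maxUExpCDF_of_nonneg_of_le hs.1 hs.2, show -(lam + t) * s = -lam * s + -t * s by ring,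
    exp_add]
  ring

lemma maxUExp_survival_eqOn_Ioi (ha : 0 < a) :
    EqOn (fun s => (1 - maxUExpCDF a lam s) * (t * exp (-t * s)))
      (fun s => t * exp (-(lam + t) * s)) (Ioi a) := by
  intro s hs
  simp only
  rw [maxUExpCDF_of_lt ha hs, show -(lam + t) * s = -lam * s + -t * s by ring, exp_add]
  ring

lemma integrableOn_maxUExp_survival (ha : 0 < a) (hlamt : 0 < lam + t) :
    IntegrableOn (fun s => (1 - maxUExpCDF a lam s) * (t * exp (-t * s))) (Ioi 0) := by
  rw [← Ioc_union_Ioi_eq_Ioi ha.le]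
  refine IntegrableOn.union ?_ ?_
  · refine (Continuous.integrableOn_Icc (by fun_prop)).mono_set Ioc_subset_Icc_self
      |>.congr_fun (maxUExp_survival_eqOn_Icc.symm.mono Ioc_subset_Icc_self) measurableSet_Ioc
  · have hexp : IntegrableOn (fun s => t * exp (-(lam + t) * s)) (Ioi a) :=
      (integrableOn_exp_mul_Ioi (neg_neg_of_pos hlamt) a).const_mul t
    exact hexp.congr_fun (maxUExp_survival_eqOn_Ioi ha).symm measurableSet_Ioi

lemma integral_maxUExp_survival (ha : 0 < a) (ht : t ≠ 0) (hlamt : 0 < lam + t) :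
    ∫ s in Ioi 0, (1 - maxUExpCDF a lam s) * (t * exp (-t * s)) =
      1 - (1 - exp (-a * t)) / (a * t)
        + (t / (a * (lam + t) ^ 2)) * (1 - exp (-a * (lam + t))) := by
  have head : ∫ s in 0..a, (1 - maxUExpCDF a lam s) * (t * exp (-t * s)) =
      1 - exp (-t * a) - t / a * ((1 - (1 + t * a) * exp (-t * a)) / t ^ 2)
        + t / a * ((1 - (1 + (lam + t) * a) * exp (-(lam + t) * a)) / (lam + t) ^ 2) := by
    rw [intervalIntegral.integral_congr (by rw [uIcc_of_le ha.le]; exact maxUExp_survival_eqOn_Icc),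
      intervalIntegral.integral_add, intervalIntegral.integral_sub, integral_mul_exp_neg_mul,
      intervalIntegral.integral_const_mul, intervalIntegral.integral_const_mul,
      integral_id_mul_exp_neg_mul ht, integral_id_mul_exp_neg_mul hlamt.ne']
    all_goals apply Continuous.intervalIntegrable; fun_prop
  have tail : ∫ s in Ioi a, (1 - maxUExpCDF a lam s) * (t * exp (-t * s)) =
      t / (lam + t) * exp (-(lam + t) * a) := by
    rw [setIntegral_congr_fun measurableSet_Ioi (maxUExp_survival_eqOn_Ioi ha),
      integral_const_mul, integral_exp_mul_Ioi (neg_neg_of_pos hlamt), neg_div_neg_eq]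
    ring
  have hint := integrableOn_maxUExp_survival (lam := lam) ha hlamt
  rw [← intervalIntegral.integral_interval_add_Ioi hint (hint.mono_set (Ioi_subset_Ioi ha.le)),
    head, tail]
  field_simp
  ring

end MaxUExp

theorem expMaxUExp_as_ratio {Ω : Type*} [MeasurableSpace Ω]
    (ℙ : Measure Ω) [IsProbabilityMeasure ℙ]
    (a lam : ℝ) (ha : 0 < a) (hlam : 0 < lam)
    (ξ η : Ω → ℝ) (hξm : Measurable ξ) (hηm : Measurable η)
    (hξ : ∀ x : ℝ, (ℙ {ω | ξ ω ≤ x}).toReal = maxUExpCDF a lam x)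
    (hη : ∀ y : ℝ, (ℙ {ω | η ω ≤ y}).toReal = if y ≤ 0 then 0 else 1 - Real.exp (-y))
    (hind : ProbabilityTheory.IndepFun ξ η ℙ) :
    ∀ t : ℝ, 0 < t →
      (ℙ {ω | η ω / ξ ω ≤ t}).toReal =
        1 - (1 - Real.exp (-a * t)) / (a * t)
          + (t / (a * (lam + t) ^ 2)) * (1 - Real.exp (-a * (lam + t))) := by
  intro t ht
  set μ := ℙ.map ξ
  have : IsProbabilityMeasure μ := Measure.isProbabilityMeasure_map hξm.aemeasurable
  have hpos : ∀ᵐ x ∂μ, 0 < x := by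
    have hμ0 : μ (Iic 0) = 0 := by
      rw [measure_map_Iic hξm, hξ, maxUExpCDF_of_nonpos le_rfl, ENNReal.ofReal_zero]
    exact ae_iff.2 (by simp only [not_lt]; exact hμ0)
  have hsurv : ∀ s, μ (Ioi s) = ENNReal.ofReal (1 - maxUExpCDF a lam s) := fun s => by
    rw [← compl_Iic, prob_compl_eq_one_sub measurableSet_Iic, measure_map_Iic hξm, hξ,
      ← ENNReal.ofReal_one, ← ENNReal.ofReal_sub _ (hξ s ▸ ENNReal.toReal_nonneg)]
  have hF_le : ∀ s, maxUExpCDF a lam s ≤ 1 := fun s => hξ s ▸ measureReal_le_one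
  calc (ℙ {ω | η ω / ξ ω ≤ t}).toReal
      = (∫⁻ x, ENNReal.ofReal (1 - Real.exp (-t * x)) ∂μ).toReal := by
        rw [hind.measure_div_le_eq_lintegral hξm hηm hpos]
        refine congrArg _ (lintegral_congr_ae (hpos.mono fun x hx => ?_))
        dsimp only
        rw [measure_map_Iic hηm, hη, if_neg (not_le.2 (by positivity)), neg_mul]
    _ = (∫⁻ s in Ioi 0, ENNReal.ofReal
          ((1 - maxUExpCDF a lam s) * (t * Real.exp (-t * s)))).toReal := by
        rw [lintegral_one_sub_exp_neg_mul (hpos.mono fun _ => le_of_lt) ht.le]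
        simp_rw [hsurv, ENNReal.ofReal_mul (sub_nonneg.mpr (hF_le _))]
    _ = _ := by
        rw [← integral_eq_lintegral_of_nonneg_ae,
          integral_maxUExp_survival ha ht.ne' (by positivity)]
        · exact ae_of_all _ fun s => mul_nonneg (sub_nonneg.mpr (hF_le s)) (by positivity)
        · exact (integrableOn_maxUExp_survival ha (by positivity)).aestronglyMeasurable
end

section
/- For a > 0, λ > 0, and a nonnegative integer n, the quantity (1/n!)[γ(n+1, a)/a + γ(n+1, a(λ+1))(nλ - 1)/(a(λ+1)^{n+2}) + nλ Γ(n, a(λ+1))/(λ+1)^{n+1}] equals ∫₀^∞ (x^n/n!) e^{-x} p(x) dx, where p is the Max-U-Exp(a, λ) density; in particular these quantities are nonnegative and sum over n to 1 (i.e., the Mixed Poisson-Max-U-Exp(a, λ) law is a probability distribution on the nonnegative integers). -/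
open MeasureTheory Set

/-- The Max-U-Exp(a, λ) probability density function. -/
noncomputable def maxUExpPDF (a lam x : ℝ) : ℝ :=
  if x ≤ 0 then 0
  else if x ≤ a then (1 / a) * (1 - Real.exp (-lam * x) + lam * x * Real.exp (-lam * x))
  else lam * Real.exp (-lam * x)

/-- The lower incomplete Gamma function γ(s, x) = ∫₀^x t^(s-1) e^{-t} dt. -/
noncomputable def lowerIncGamma (s x : ℝ) : ℝ :=
  ∫ t in Set.Ioc (0 : ℝ) x, t ^ (s - 1) * Real.exp (-t)

/-- The upper incomplete Gamma function Γ(s, x) = ∫_x^∞ t^(s-1) e^{-t} dt. -/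
noncomputable def upperIncGamma (s x : ℝ) : ℝ :=
  ∫ t in Set.Ioi x, t ^ (s - 1) * Real.exp (-t)

/-- The Mixed Poisson-Max-U-Exp(a, λ) probability mass function. -/
noncomputable def mixedPoissonMaxUExpPMF (a lam : ℝ) (n : ℕ) : ℝ :=
  (1 / (n.factorial : ℝ)) *
    (lowerIncGamma ((n : ℝ) + 1) a / a
      + lowerIncGamma ((n : ℝ) + 1) (a * (lam + 1)) * ((n : ℝ) * lam - 1) /
          (a * (lam + 1) ^ (n + 2))
      + (n : ℝ) * lam * upperIncGamma (n : ℝ) (a * (lam + 1)) / (lam + 1) ^ (n + 1))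

/-! On `(0, a]` the integrand `x ^ n e⁻ˣ p(x)` is a combination of `x ^ k e^{-μx}` with
`μ ∈ {1, λ + 1}`, and on `(a, ∞)` it is `λ x ^ n e^{-(λ+1)x}`. The substitution `t = μx` turns
these pieces into incomplete Gamma values, and the recurrences `γ(s+1, x) = s γ(s, x) - xˢ e⁻ˣ`,
`Γ(s+1, x) = s Γ(s, x) + xˢ e⁻ˣ` bring them to the stated closed form. Summing over `n`,
`∑ xⁿ/n! e⁻ˣ = 1` and monotone convergence give `∑ₙ pmf(n) = ∫ p = 1`. -/

open Real
open scoped Nat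

section IncompleteGamma
variable {s x μ : ℝ}

lemma rpow_sub_one_mul_exp_neg_mul (s : ℝ) (hμ : 0 < μ) {t : ℝ} (ht : 0 ≤ t) :
    t ^ (s - 1) * exp (-(μ * t)) = μ ^ (1 - s) * ((μ * t) ^ (s - 1) * exp (-(μ * t))) := by
  rw [mul_rpow hμ.le ht, ← mul_assoc, ← mul_assoc, ← rpow_add hμ, sub_add_sub_cancel', sub_self,
    rpow_zero, one_mul]

lemma integral_Ioc_rpow_mul_exp_neg_mul (s : ℝ) (hμ : 0 < μ) (hx : 0 ≤ x) :
    ∫ t in Ioc 0 x, t ^ (s - 1) * exp (-(μ * t)) = lowerIncGamma s (μ * x) / μ ^ s := by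
  rw [setIntegral_congr_fun measurableSet_Ioc
      fun t ht => rpow_sub_one_mul_exp_neg_mul s hμ ht.1.le, integral_const_mul,
    ← intervalIntegral.integral_of_le hx,
    intervalIntegral.integral_comp_mul_left (fun t => t ^ (s - 1) * exp (-t)) hμ.ne',
    mul_zero, intervalIntegral.integral_of_le (by positivity), lowerIncGamma, smul_eq_mul,
    rpow_sub hμ, rpow_one]
  field_simp

lemma integral_Ioi_rpow_mul_exp_neg_mul (s : ℝ) (hμ : 0 < μ) (hx : 0 ≤ x) :
    ∫ t in Ioi x, t ^ (s - 1) * exp (-(μ * t)) = upperIncGamma s (μ * x) / μ ^ s := by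
  rw [setIntegral_congr_fun measurableSet_Ioi
      fun t ht => rpow_sub_one_mul_exp_neg_mul s hμ (hx.trans ht.le), integral_const_mul,
    integral_comp_mul_left_Ioi (fun t => t ^ (s - 1) * exp (-t)) x hμ, upperIncGamma,
    smul_eq_mul, rpow_sub hμ, rpow_one]
  field_simp

lemma integrableOn_rpow_mul_exp_neg_Ioi (s : ℝ) (hx : 0 < x) :
    IntegrableOn (fun t => t ^ s * exp (-t)) (Ioi x) := by
  refine integrable_of_isBigO_exp_neg one_half_pos ?_ ?_
  · exact ((continuousOn_id.rpow_const fun t ht => Or.inl (hx.trans_le ht).ne').mul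
      (continuous_exp.comp continuous_neg).continuousOn)
  · simpa [mul_comm] using (Gamma_integrand_isLittleO s).isBigO

lemma hasDerivAt_neg_rpow_mul_exp_neg (s : ℝ) {t : ℝ} (ht : 0 < t) :
    HasDerivAt (fun t => -(t ^ s * exp (-t)))
      (t ^ s * exp (-t) - s * (t ^ (s - 1) * exp (-t))) t :=
  ((hasDerivAt_rpow_const (Or.inl ht.ne')).mul (hasDerivAt_neg t).exp).neg.congr_deriv
    (by ring)

lemma upperIncGamma_add_one (s : ℝ) (hx : 0 < x) :
    upperIncGamma (s + 1) x = s * upperIncGamma s x + x ^ s * exp (-x) := by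
  have hint := integrableOn_rpow_mul_exp_neg_Ioi s hx
  have hint' := (integrableOn_rpow_mul_exp_neg_Ioi (s - 1) hx).const_mul s
  have hftc := integral_Ioi_of_hasDerivAt_of_tendsto (f := fun t => -(t ^ s * exp (-t)))
    ((continuousAt_rpow_const x s (Or.inl hx.ne')).mul
      (continuous_exp.comp continuous_neg).continuousAt).neg.continuousWithinAt
    (fun t ht => hasDerivAt_neg_rpow_mul_exp_neg s (hx.trans ht)) (hint.sub hint')
    (by simpa using (tendsto_rpow_mul_exp_neg_mul_atTop_nhds_zero s 1 one_pos).neg)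
  rw [integral_sub hint hint', integral_const_mul] at hftc
  simp only [upperIncGamma, add_sub_cancel_right]
  linarith

lemma lowerIncGamma_add_one (hs : 0 < s) (hx : 0 ≤ x) :
    lowerIncGamma (s + 1) x = s * lowerIncGamma s x - x ^ s * exp (-x) := by
  have hint : IntervalIntegrable (fun t => t ^ s * exp (-t)) volume 0 x :=
    ((continuous_rpow_const hs.le).mul (continuous_exp.comp continuous_neg)).intervalIntegrable _ _
  have hint' : IntervalIntegrable (fun t => s * (t ^ (s - 1) * exp (-t))) volume 0 x :=
    ((intervalIntegral.intervalIntegrable_rpow' (by linarith)).mul_continuousOn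
      (continuous_exp.comp continuous_neg).continuousOn).const_mul s
  have hftc := intervalIntegral.integral_eq_sub_of_hasDerivAt_of_le
    (f := fun t => -(t ^ s * exp (-t))) hx
    ((continuous_rpow_const hs.le).mul (continuous_exp.comp continuous_neg)).neg.continuousOn
    (fun t ht => hasDerivAt_neg_rpow_mul_exp_neg s ht.1) (hint.sub hint')
  rw [intervalIntegral.integral_sub hint hint', intervalIntegral.integral_const_mul,
    intervalIntegral.integral_of_le hx, intervalIntegral.integral_of_le hx,
    zero_rpow hs.ne', zero_mul, neg_zero, sub_zero] at hftc
  simp only [lowerIncGamma, add_sub_cancel_right]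
  linarith

lemma integral_Ioc_pow_mul_exp_neg_mul (n : ℕ) (hμ : 0 < μ) (hx : 0 ≤ x) :
    ∫ t in Ioc 0 x, t ^ n * exp (-(μ * t)) =
      lowerIncGamma ((n : ℝ) + 1) (μ * x) / μ ^ (n + 1) := by
  simpa [rpow_add_one hμ.ne', pow_succ] using
    integral_Ioc_rpow_mul_exp_neg_mul ((n : ℝ) + 1) hμ hx

lemma integral_Ioi_pow_mul_exp_neg_mul (n : ℕ) (hμ : 0 < μ) (hx : 0 ≤ x) :
    ∫ t in Ioi x, t ^ n * exp (-(μ * t)) =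
      upperIncGamma ((n : ℝ) + 1) (μ * x) / μ ^ (n + 1) := by
  simpa [rpow_add_one hμ.ne', pow_succ] using
    integral_Ioi_rpow_mul_exp_neg_mul ((n : ℝ) + 1) hμ hx

end IncompleteGamma

section MaxUExp
variable {a lam x : ℝ}

lemma maxUExpPDF_of_mem_Ioc (hx : x ∈ Ioc 0 a) :
    maxUExpPDF a lam x = 1 / a * (1 - exp (-lam * x) + lam * x * exp (-lam * x)) := by
  rw [maxUExpPDF, if_neg hx.1.not_ge, if_pos hx.2]

lemma maxUExpPDF_of_lt (ha : 0 ≤ a) (hx : a < x) : maxUExpPDF a lam x = lam * exp (-lam * x) := by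
  rw [maxUExpPDF, if_neg (ha.trans_lt hx).not_ge, if_neg hx.not_ge]

lemma maxUExpPDF_nonneg (hlam : 0 ≤ lam) (x : ℝ) : 0 ≤ maxUExpPDF a lam x := by
  unfold maxUExpPDF
  split_ifs with hx0 hxa
  · rfl
  · have hx : 0 < x := not_le.1 hx0
    have : exp (-lam * x) ≤ 1 := exp_le_one_iff.2 (by nlinarith)
    have : 0 ≤ lam * x * exp (-lam * x) := by positivity
    exact mul_nonneg (one_div_nonneg.2 (hx.le.trans hxa)) (by linarith)
  · positivity

lemma integrableOn_maxUExpPDF (ha : 0 < a) (hlam : 0 < lam) :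
    IntegrableOn (maxUExpPDF a lam) (Ioi 0) := by
  rw [← Ioc_union_Ioi_eq_Ioi ha.le]
  refine IntegrableOn.union ?_ ?_
  · refine (Continuous.integrableOn_Ioc ?_).congr_fun
      (fun x hx => (maxUExpPDF_of_mem_Ioc hx).symm) measurableSet_Ioc
    fun_prop
  · exact IntegrableOn.congr_fun ((exp_neg_integrableOn_Ioi a hlam).const_mul lam)
      (fun x hx => (maxUExpPDF_of_lt ha.le hx).symm) measurableSet_Ioi

lemma integral_maxUExpPDF (ha : 0 < a) (hlam : 0 < lam) :
    ∫ x in Ioi 0, maxUExpPDF a lam x = 1 := by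
  have hp := integrableOn_maxUExpPDF ha hlam
  have hderiv : ∀ x ∈ uIcc 0 a, HasDerivAt (fun x => x - x * exp (-lam * x))
      (1 - exp (-lam * x) + lam * x * exp (-lam * x)) x := by
    intro x _
    exact ((hasDerivAt_id x).sub ((hasDerivAt_id x).mul
      ((hasDerivAt_id x).const_mul (-lam)).exp)).congr_deriv (by simp only [id_eq]; ring)
  rw [← Ioc_union_Ioi_eq_Ioi ha.le, setIntegral_union (Ioc_disjoint_Ioi le_rfl) measurableSet_Ioi
      (hp.mono_set Ioc_subset_Ioi_self) (hp.mono_set (Ioi_subset_Ioi ha.le)),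
    setIntegral_congr_fun measurableSet_Ioc (fun x hx => maxUExpPDF_of_mem_Ioc hx),
    setIntegral_congr_fun measurableSet_Ioi (fun x hx => maxUExpPDF_of_lt ha.le hx),
    integral_const_mul, integral_const_mul, ← intervalIntegral.integral_of_le ha.le,
    intervalIntegral.integral_eq_sub_of_hasDerivAt hderiv
      (Continuous.intervalIntegrable (by fun_prop) _ _),
    integral_exp_mul_Ioi (neg_lt_zero.2 hlam)]
  field_simp
  ring

end MaxUExp

section MixedPoisson
variable {g : ℝ → ℝ}

lemma integrableOn_pow_div_factorial_mul_exp_neg_mul (hg : IntegrableOn g (Ioi 0)) (n : ℕ) :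
    IntegrableOn (fun x => x ^ n / n ! * exp (-x) * g x) (Ioi 0) := by
  refine hg.bdd_mul (c := 1) (Continuous.aestronglyMeasurable (by fun_prop)) ?_
  filter_upwards [ae_restrict_mem measurableSet_Ioi] with x hx
  have hx : 0 ≤ x := (mem_Ioi.1 hx).le
  rw [norm_of_nonneg (by positivity)]
  calc x ^ n / n ! * exp (-x) ≤ exp x * exp (-x) := by
        gcongr; exact pow_div_factorial_le_exp x hx n
    _ = 1 := by rw [← exp_add, add_neg_cancel, exp_zero]

lemma setIntegral_pow_div_factorial_mul_exp_neg_mul_nonneg (hg0 : ∀ x ∈ Ioi 0, 0 ≤ g x)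
    (n : ℕ) : 0 ≤ ∫ x in Ioi 0, x ^ n / n ! * exp (-x) * g x :=
  setIntegral_nonneg measurableSet_Ioi fun x hx =>
    mul_nonneg (by have := (mem_Ioi.1 hx).le; positivity) (hg0 x hx)

lemma hasSum_integral_pow_div_factorial_mul_exp_neg_mul (hg : IntegrableOn g (Ioi 0))
    (hg0 : ∀ x ∈ Ioi 0, 0 ≤ g x) :
    HasSum (fun n : ℕ => ∫ x in Ioi 0, x ^ n / n ! * exp (-x) * g x) (∫ x in Ioi 0, g x) := by
  have hexp : ∀ x, HasSum (fun n : ℕ => x ^ n / n ! * exp (-x) * g x) (g x) := fun x => by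
    have h := (NormedSpace.expSeries_div_hasSum_exp x).mul_right (exp (-x) * g x)
    rw [← exp_eq_exp_ℝ, ← mul_assoc, ← exp_add, add_neg_cancel, exp_zero, one_mul] at h
    simpa only [mul_assoc] using h
  rw [hasSum_iff_tendsto_nat_of_nonneg (setIntegral_pow_div_factorial_mul_exp_neg_mul_nonneg hg0)]
  simp_rw [← integral_finsetSum _ fun n _ => integrableOn_pow_div_factorial_mul_exp_neg_mul hg n]
  refine integral_tendsto_of_tendsto_of_monotone
    (fun _ => integrable_finsetSum _ fun n _ => integrableOn_pow_div_factorial_mul_exp_neg_mul hg n)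
    hg ?_ (ae_of_all _ fun x => (hexp x).tendsto_sum_nat)
  filter_upwards [ae_restrict_mem measurableSet_Ioi] with x hx
  have hterm : ∀ n : ℕ, 0 ≤ x ^ n / n ! * exp (-x) * g x :=
    fun n => mul_nonneg (by have := (mem_Ioi.1 hx).le; positivity) (hg0 x hx)
  exact monotone_nat_of_le_succ fun N => by
    rw [Finset.sum_range_succ]; linarith [hterm N]

end MixedPoisson

section MixedPoissonMaxUExp
variable {a lam : ℝ}

lemma mixedPoissonMaxUExpPMF_eq_integral (ha : 0 < a) (hlam : 0 < lam) (n : ℕ) :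
    mixedPoissonMaxUExpPMF a lam n =
      ∫ x in Ioi 0, x ^ n / n ! * exp (-x) * maxUExpPDF a lam x := by
  set μ := lam + 1 with hμ_def
  have hμ : 0 < μ := by linarith
  have hf := integrableOn_pow_div_factorial_mul_exp_neg_mul (integrableOn_maxUExpPDF ha hlam) n
  have hint : ∀ (k : ℕ) (c : ℝ), IntegrableOn (fun x => x ^ k * exp (-(c * x))) (Ioc 0 a) :=
    fun k c => Continuous.integrableOn_Ioc (by fun_prop)
  have hmid : ∀ x ∈ Ioc 0 a, x ^ n / n ! * exp (-x) * maxUExpPDF a lam x = (n ! * a)⁻¹ *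
      (x ^ n * exp (-(1 * x)) - x ^ n * exp (-(μ * x)) + lam * (x ^ (n + 1) * exp (-(μ * x)))) := by
    intro x hx
    rw [maxUExpPDF_of_mem_Ioc hx, show -(μ * x) = -x + -lam * x by ring, exp_add, one_mul]
    field_simp
    ring
  have htail : ∀ x ∈ Ioi a, x ^ n / n ! * exp (-x) * maxUExpPDF a lam x =
      (n ! : ℝ)⁻¹ * lam * (x ^ n * exp (-(μ * x))) := by
    intro x hx
    rw [maxUExpPDF_of_lt ha.le hx, show -(μ * x) = -x + -lam * x by ring, exp_add]
    ring
  rw [← Ioc_union_Ioi_eq_Ioi ha.le, setIntegral_union (Ioc_disjoint_Ioi le_rfl) measurableSet_Ioi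
      (hf.mono_set Ioc_subset_Ioi_self) (hf.mono_set (Ioi_subset_Ioi ha.le)),
    setIntegral_congr_fun measurableSet_Ioc hmid, setIntegral_congr_fun measurableSet_Ioi htail,
    integral_const_mul, integral_const_mul, integral_add (by exact (hint n 1).sub (hint n μ))
      (by exact (hint (n + 1) μ).const_mul lam), integral_sub (hint n 1) (hint n μ),
    integral_const_mul, integral_Ioc_pow_mul_exp_neg_mul n one_pos ha.le,
    integral_Ioc_pow_mul_exp_neg_mul n hμ ha.le, integral_Ioc_pow_mul_exp_neg_mul (n + 1) hμ ha.le,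
    integral_Ioi_pow_mul_exp_neg_mul n hμ ha.le, Nat.cast_add_one,
    lowerIncGamma_add_one (s := (n : ℝ) + 1) (by positivity) (by positivity),
    upperIncGamma_add_one _ (by positivity), rpow_add_one (by positivity), rpow_natCast,
    mixedPoissonMaxUExpPMF, ← hμ_def, one_mul, one_pow, div_one, mul_comm a μ]
  field_simp
  ring

end MixedPoissonMaxUExp

theorem mixedPoissonMaxUExp_is_pmf (a lam : ℝ) (ha : 0 < a) (hlam : 0 < lam) :
    (∀ n : ℕ, mixedPoissonMaxUExpPMF a lam n =
      ∫ x in Set.Ioi (0 : ℝ),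
        x ^ n / (n.factorial : ℝ) * Real.exp (-x) * maxUExpPDF a lam x) ∧
    (∀ n : ℕ, 0 ≤ mixedPoissonMaxUExpPMF a lam n) ∧
    (∑' n : ℕ, mixedPoissonMaxUExpPMF a lam n) = 1 := by
  have hpdf := integrableOn_maxUExpPDF ha hlam
  have hpdf0 : ∀ x ∈ Ioi (0 : ℝ), 0 ≤ maxUExpPDF a lam x := fun x _ => maxUExpPDF_nonneg hlam.le x
  refine ⟨mixedPoissonMaxUExpPMF_eq_integral ha hlam, fun n => ?_, ?_⟩
  · rw [mixedPoissonMaxUExpPMF_eq_integral ha hlam]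
    exact setIntegral_pow_div_factorial_mul_exp_neg_mul_nonneg hpdf0 n
  · simp_rw [mixedPoissonMaxUExpPMF_eq_integral ha hlam, ← integral_maxUExpPDF ha hlam]
    exact (hasSum_integral_pow_div_factorial_mul_exp_neg_mul hpdf hpdf0).tsum_eq
end
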